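/- arXiv:math/0401081 — 2 statements merged into one kernel-verified Lean document; each statement's English description precedes it below -/
import Mathlib

section
/- Let K be a field and let C be a chain complex of K-modules equipped with a decreasing filtration by subcomplexes F^0 C = C ⊇ F^1 C ⊇ F^2 C ⊇ ⋯ which is separated and complete. Suppose the associated graded complex is acyclic, in the elementwise sense that for every n ≥ 0 and every degree i, every x ∈ F^n C_i with d x ∈ F^{n+1} C_{i−1} can be written as x = d y + z with y ∈ F^n C_{i+1} and z ∈ F^{n+1} C_i. Then C itself is acyclic: every x ∈ C_i with d x = 0 equals d y for some y ∈ C_{i+1}. -/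
/-!
Starting from a cycle `x = x₀ ∈ F⁰`, acyclicity of the associated graded complex writes each cycle
`xₙ ∈ Fⁿ` as `d yₙ + xₙ₊₁` with `yₙ ∈ Fⁿ` and `xₙ₊₁ ∈ Fⁿ⁺¹` again a cycle (because `d ∘ d = 0`).
By completeness the series `∑ yₙ` has a limit `y`, and `x - d y` lies in every `Fᵐ`, so it vanishes
by separatedness.
-/

open Finset

section Filtration

variable {R M N P : Type*} [Ring R] [AddCommGroup M] [Module R M] [AddCommGroup N] [Module R N]
  [AddCommGroup P] [Module R P]

def IsSeparatedFiltration (F : ℕ → Submodule R M) : Prop :=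
  ∀ x, (∀ n, x ∈ F n) → x = 0

def IsCompleteFiltration (F : ℕ → Submodule R M) : Prop :=
  ∀ xs : ℕ → M, (∀ n, 1 ≤ n → xs n - xs (n - 1) ∈ F n) →
    ∃ x, ∀ m, ∃ N, ∀ n, N ≤ n → xs n - x ∈ F m

theorem IsCompleteFiltration.exists_limit_partialSums {F : ℕ → Submodule R M}
    (hF : IsCompleteFiltration F) {ys : ℕ → M} (hys : ∀ n, ys n ∈ F n) :
    ∃ y, ∀ m, ∃ N, ∀ n, N ≤ n → ∑ k ∈ range n, ys k - y ∈ F m := by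
  obtain ⟨y, hy⟩ := hF (fun n => ∑ k ∈ range (n + 1), ys k) fun n hn => by
    obtain ⟨k, rfl⟩ := Nat.exists_eq_add_of_le' hn
    simpa [sum_range_succ _ (k + 1)] using hys (k + 1)
  refine ⟨y, fun m => ?_⟩
  obtain ⟨N, hN⟩ := hy m
  refine ⟨N + 1, fun n hn => ?_⟩
  obtain ⟨k, rfl⟩ := Nat.exists_eq_add_of_le' (Nat.one_le_of_lt hn)
  exact hN k (by omega)

variable {FM : ℕ → Submodule R M} {FN : ℕ → Submodule R N} {d₁ : M →ₗ[R] N} {d₀ : N →ₗ[R] P}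

theorem exists_boundary_approximations (hdd : ∀ y, d₀ (d₁ y) = 0)
    (hgr : ∀ n x, x ∈ FN n → d₀ x = 0 → ∃ y ∈ FM n, ∃ z ∈ FN (n + 1), d₁ y + z = x)
    {x : N} (hx₀ : x ∈ FN 0) (hx : d₀ x = 0) :
    ∃ ys : ℕ → M, (∀ n, ys n ∈ FM n) ∧ ∀ n, x - d₁ (∑ k ∈ range n, ys k) ∈ FN n := by
  have step : ∀ n x, x ∈ FN n ∧ d₀ x = 0 →
      ∃ y z, y ∈ FM n ∧ (z ∈ FN (n + 1) ∧ d₀ z = 0) ∧ d₁ y + z = x := by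
    rintro n x ⟨hxn, hx⟩
    obtain ⟨y, hy, z, hz, rfl⟩ := hgr n x hxn hx
    refine ⟨y, z, hy, ⟨hz, ?_⟩, rfl⟩
    simpa [hdd] using hx
  choose! y z hy hz hyz using step
  let rem : ℕ → N := fun n => Nat.rec x (fun n r => z n r) n
  have hrem : ∀ n, rem n ∈ FN n ∧ d₀ (rem n) = 0 := fun n => by
    induction n with
    | zero => exact ⟨hx₀, hx⟩
    | succ n ih => exact hz n (rem n) ih
  refine ⟨fun n => y n (rem n), fun n => hy n _ (hrem n), fun n => ?_⟩
  suffices x - d₁ (∑ k ∈ range n, y k (rem k)) = rem n from this ▸ (hrem n).1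
  induction n with
  | zero => simp [rem]
  | succ n ih =>
    rw [sum_range_succ, map_add, ← sub_sub, ih]
    exact sub_eq_of_eq_add' (hyz n (rem n) (hrem n)).symm

theorem exists_eq_boundary_of_graded_exact (hdd : ∀ y, d₀ (d₁ y) = 0)
    (hgr : ∀ n x, x ∈ FN n → d₀ x = 0 → ∃ y ∈ FM n, ∃ z ∈ FN (n + 1), d₁ y + z = x)
    (hd₁ : ∀ n y, y ∈ FM n → d₁ y ∈ FN n) (hFN : Antitone FN)
    (hsep : IsSeparatedFiltration FN) (hcompl : IsCompleteFiltration FM)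
    {x : N} (hx₀ : x ∈ FN 0) (hx : d₀ x = 0) : ∃ y, d₁ y = x := by
  obtain ⟨ys, hys, happrox⟩ := exists_boundary_approximations hdd hgr hx₀ hx
  obtain ⟨y, hy⟩ := hcompl.exists_limit_partialSums hys
  refine ⟨y, (sub_eq_zero.mp (hsep _ fun m => ?_)).symm⟩
  obtain ⟨N, hN⟩ := hy m
  have hsplit : x - d₁ y =
      (x - d₁ (∑ k ∈ range (max N m), ys k)) + d₁ (∑ k ∈ range (max N m), ys k - y) := by
    rw [map_sub]; abel
  rw [hsplit]
  exact add_mem (hFN (le_max_right N m) (happrox _)) (hd₁ m _ (hN _ (le_max_left N m)))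

end Filtration

/-- **Lemma (acyclicity from a complete filtration).**
`K` is a field, `C` is a `ℤ`-indexed chain complex of `K`-modules with
differential `d i : C (i+1) → C i`, equipped with a decreasing filtration
`F : ℕ → Π i, Submodule K (C i)` by subcomplexes with `F 0 = ⊤`, which is
separated and complete.  If the associated graded complex is acyclic
(elementwise), then `C` is acyclic. -/
theorem stmt_0
    (K : Type*) [Field K]
    (C : ℤ → Type*) [∀ i, AddCommGroup (C i)] [∀ i, Module K (C i)]
    (d : ∀ i : ℤ, C (i + 1) →ₗ[K] C i)
    (hdd : ∀ (i : ℤ) (x : C (i + 1 + 1)), d i (d (i + 1) x) = 0)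
    (F : ℕ → ∀ i : ℤ, Submodule K (C i))
    (hF0 : ∀ i : ℤ, F 0 i = ⊤)
    (hFmono : ∀ (n : ℕ) (i : ℤ), F (n + 1) i ≤ F n i)
    (hFd : ∀ (n : ℕ) (i : ℤ) (x : C (i + 1)), x ∈ F n (i + 1) → d i x ∈ F n i)
    (hsep : ∀ (i : ℤ) (x : C i), (∀ n : ℕ, x ∈ F n i) → x = 0)
    (hcompl : ∀ (i : ℤ) (xs : ℕ → C i),
      (∀ n : ℕ, 1 ≤ n → xs n - xs (n - 1) ∈ F n i) →
      ∃ x : C i, ∀ m : ℕ, ∃ N : ℕ, ∀ n : ℕ, N ≤ n → xs n - x ∈ F m i)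
    (hgr : ∀ (n : ℕ) (i : ℤ) (x : C (i + 1)),
      x ∈ F n (i + 1) → d i x ∈ F (n + 1) i →
      ∃ y ∈ F n (i + 1 + 1), ∃ z ∈ F (n + 1) (i + 1), x = d (i + 1) y + z) :
    ∀ (i : ℤ) (x : C (i + 1)), d i x = 0 → ∃ y : C (i + 1 + 1), d (i + 1) y = x := by
  intro i x hx
  refine exists_eq_boundary_of_graded_exact (hdd i) (fun n x hxn hdx => ?_) (hFd · (i + 1))
    (antitone_nat_of_succ_le (hFmono · (i + 1))) (hsep (i + 1)) (hcompl (i + 1 + 1))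
    (hF0 (i + 1) ▸ Submodule.mem_top) hx
  obtain ⟨y, hy, z, hz, hxyz⟩ := hgr n i x hxn (hdx ▸ zero_mem _)
  exact ⟨y, hy, z, hz, hxyz.symm⟩
end

section
/- Let K be a field and let f : C → D be a chain map between chain complexes of K-modules, where C and D are equipped with decreasing filtrations by subcomplexes F^0 C = C ⊇ F^1 C ⊇ ⋯ and F^0 D = D ⊇ F^1 D ⊇ ⋯ which are both separated and complete, and suppose f is filtration-preserving: f(F^n C_i) ⊆ F^n D_i for all n and i. If for every n ≥ 0 the induced map of quotient complexes F^n C / F^{n+1} C → F^n D / F^{n+1} D (with the induced differentials) is a quasi-isomorphism, then f is a quasi-isomorphism, i.e. f induces an isomorphism on homology in every degree. -/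
/-!
A pair `(x, a)` with `d x = f a` and `d a = 0` is a cycle of the mapping cone of `f`, and both
halves of the conclusion say that such a cycle is a boundary: `a = d b` and `x - f b = d y`.
The graded hypotheses move a cone cycle lying in filtration `n` into filtration `n + 1` by
subtracting the boundary of a chain of filtration `n`. Iterating, the accumulated chains form
Cauchy sequences; by completeness they converge, and by separatedness the limit is an exact
primitive.
-/

theorem exists_seq_of_forall_exists_succ {α : Type*} {P : ℕ → α → Prop} {R : ℕ → α → α → Prop}
    {a : α} (h₀ : P 0 a) (h : ∀ n x, P n x → ∃ y, P (n + 1) y ∧ R n x y) :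
    ∃ s : ℕ → α, (∀ n, P n (s n)) ∧ ∀ n, R n (s n) (s (n + 1)) := by
  choose! g hgP hgR using h
  let s : ℕ → α := fun n => Nat.rec a (fun k x => g k x) n
  have hs : ∀ n, P n (s n) := fun n => by
    induction n with
    | zero => exact h₀
    | succ n ih => exact hgP n _ ih
  exact ⟨s, hs, fun n => hgR n _ (hs n)⟩

section Filtration

variable {R M : Type*} [Ring R] [AddCommGroup M] [Module R M] {F : ℕ → Submodule R M}

theorem exists_limit_of_succ_sub_mem
    (hF : ∀ xs : ℕ → M, (∀ n : ℕ, 1 ≤ n → xs n - xs (n - 1) ∈ F n) →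
      ∃ x : M, ∀ m : ℕ, ∃ N : ℕ, ∀ n : ℕ, N ≤ n → xs n - x ∈ F m)
    {s : ℕ → M} (hs : ∀ n, s (n + 1) - s n ∈ F n) :
    ∃ x : M, ∀ m : ℕ, ∃ N : ℕ, ∀ n : ℕ, N ≤ n → s n - x ∈ F m := by
  obtain ⟨x, hx⟩ := hF (fun n => s (n + 1)) fun n hn => by
    simpa [Nat.sub_add_cancel hn] using hs n
  refine ⟨x, fun m => ?_⟩
  obtain ⟨N, hN⟩ := hx m
  refine ⟨N + 1, fun n hn => ?_⟩
  simpa [Nat.sub_add_cancel (by omega : 1 ≤ n)] using hN (n - 1) (by omega)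

theorem eq_zero_of_eventually_sub_mem (hsep : ∀ x : M, (∀ n : ℕ, x ∈ F n) → x = 0)
    (hF : Antitone F) {v : M} {r : ℕ → M} (hr : ∀ n, r n ∈ F n)
    (h : ∀ m : ℕ, ∃ N : ℕ, ∀ n : ℕ, N ≤ n → v - r n ∈ F m) : v = 0 := by
  refine hsep v fun m => ?_
  obtain ⟨N, hN⟩ := h m
  have hmax : r (max N m) ∈ F m := hF (le_max_right N m) (hr _)
  simpa using add_mem (hN _ (le_max_left N m)) hmax

end Filtration

section FilteredComplex

variable {R : Type*} [Ring R]
  {C : ℤ → Type*} [∀ i, AddCommGroup (C i)] [∀ i, Module R (C i)]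
  {D : ℤ → Type*} [∀ i, AddCommGroup (D i)] [∀ i, Module R (D i)]
  {dC : ∀ i : ℤ, C (i + 1) →ₗ[R] C i} {dD : ∀ i : ℤ, D (i + 1) →ₗ[R] D i}
  {f : ∀ i : ℤ, C i →ₗ[R] D i}
  {FC : ℕ → ∀ i : ℤ, Submodule R (C i)} {FD : ℕ → ∀ i : ℤ, Submodule R (D i)}

theorem exists_cone_boundary_sub_mem_succ
    (hf : ∀ (i : ℤ) (x : C (i + 1)), f i (dC i x) = dD i (f (i + 1) x))
    (hfF : ∀ (n : ℕ) (i : ℤ) (x : C i), x ∈ FC n i → f i x ∈ FD n i)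
    (hgrSurj : ∀ (n : ℕ) (i : ℤ) (x : D (i + 1)),
      x ∈ FD n (i + 1) → dD i x ∈ FD (n + 1) i →
      ∃ a ∈ FC n (i + 1), dC i a ∈ FC (n + 1) i ∧
        ∃ y ∈ FD n (i + 1 + 1), ∃ z ∈ FD (n + 1) (i + 1),
          x - f (i + 1) a = dD (i + 1) y + z)
    (hgrInj : ∀ (n : ℕ) (i : ℤ) (a : C (i + 1)),
      a ∈ FC n (i + 1) → dC i a ∈ FC (n + 1) i →
      (∃ y ∈ FD n (i + 1 + 1), ∃ z ∈ FD (n + 1) (i + 1),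
        f (i + 1) a = dD (i + 1) y + z) →
      ∃ b ∈ FC n (i + 1 + 1), ∃ c ∈ FC (n + 1) (i + 1), a = dC (i + 1) b + c)
    {n : ℕ} {j : ℤ} {x : D (j + 1 + 1)} {a : C (j + 1)}
    (hx : x ∈ FD n (j + 1 + 1)) (ha : a ∈ FC n (j + 1))
    (hxa : dD (j + 1) x = f (j + 1) a) (hca : dC j a = 0) :
    ∃ y ∈ FD n (j + 1 + 1 + 1), ∃ b ∈ FC n (j + 1 + 1),
      x - dD (j + 1 + 1) y - f (j + 1 + 1) b ∈ FD (n + 1) (j + 1 + 1) ∧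
      a - dC (j + 1) b ∈ FC (n + 1) (j + 1) := by
  -- graded injectivity gives `a ≡ d b₁` modulo `Fⁿ⁺¹`; then `x - f b₁` is a graded cycle
  obtain ⟨b₁, hb₁, c, hc, hac⟩ :=
    hgrInj n j a ha (by simp [hca]) ⟨x, hx, 0, zero_mem _, by simp [hxa]⟩
  have hdx : dD (j + 1) (x - f (j + 1 + 1) b₁) = f (j + 1) c := by
    rw [map_sub, hxa, ← hf, hac, map_add, add_sub_cancel_left]
  obtain ⟨b₂, hb₂, hdb₂, y, hy, z, hz, hxz⟩ :=
    hgrSurj n (j + 1) _ (sub_mem hx (hfF _ _ _ hb₁)) (hdx ▸ hfF _ _ _ hc)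
  refine ⟨y, hy, b₁ + b₂, add_mem hb₁ hb₂, ?_, ?_⟩
  · convert hz using 1
    rw [map_add]
    linear_combination (norm := module) hxz
  · convert sub_mem hc hdb₂ using 1
    rw [hac, map_add]
    abel

theorem exists_seq_cone_boundary_sub_mem
    (hddC : ∀ (i : ℤ) (x : C (i + 1 + 1)), dC i (dC (i + 1) x) = 0)
    (hddD : ∀ (i : ℤ) (x : D (i + 1 + 1)), dD i (dD (i + 1) x) = 0)
    (hf : ∀ (i : ℤ) (x : C (i + 1)), f i (dC i x) = dD i (f (i + 1) x))
    (hFC0 : ∀ i : ℤ, FC 0 i = ⊤) (hFD0 : ∀ i : ℤ, FD 0 i = ⊤)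
    (hfF : ∀ (n : ℕ) (i : ℤ) (x : C i), x ∈ FC n i → f i x ∈ FD n i)
    (hgrSurj : ∀ (n : ℕ) (i : ℤ) (x : D (i + 1)),
      x ∈ FD n (i + 1) → dD i x ∈ FD (n + 1) i →
      ∃ a ∈ FC n (i + 1), dC i a ∈ FC (n + 1) i ∧
        ∃ y ∈ FD n (i + 1 + 1), ∃ z ∈ FD (n + 1) (i + 1),
          x - f (i + 1) a = dD (i + 1) y + z)
    (hgrInj : ∀ (n : ℕ) (i : ℤ) (a : C (i + 1)),
      a ∈ FC n (i + 1) → dC i a ∈ FC (n + 1) i →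
      (∃ y ∈ FD n (i + 1 + 1), ∃ z ∈ FD (n + 1) (i + 1),
        f (i + 1) a = dD (i + 1) y + z) →
      ∃ b ∈ FC n (i + 1 + 1), ∃ c ∈ FC (n + 1) (i + 1), a = dC (i + 1) b + c)
    {j : ℤ} {x : D (j + 1 + 1)} {a : C (j + 1)}
    (hxa : dD (j + 1) x = f (j + 1) a) (hca : dC j a = 0) :
    ∃ (y : ℕ → D (j + 1 + 1 + 1)) (b : ℕ → C (j + 1 + 1)),
      (∀ n, y (n + 1) - y n ∈ FD n (j + 1 + 1 + 1)) ∧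
      (∀ n, b (n + 1) - b n ∈ FC n (j + 1 + 1)) ∧
      (∀ n, x - dD (j + 1 + 1) (y n) - f (j + 1 + 1) (b n) ∈ FD n (j + 1 + 1)) ∧
      ∀ n, a - dC (j + 1) (b n) ∈ FC n (j + 1) := by
  obtain ⟨s, hs, hsucc⟩ := exists_seq_of_forall_exists_succ
    (P := fun n (p : D (j + 1 + 1 + 1) × C (j + 1 + 1)) =>
      x - dD (j + 1 + 1) p.1 - f (j + 1 + 1) p.2 ∈ FD n (j + 1 + 1) ∧
      a - dC (j + 1) p.2 ∈ FC n (j + 1))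
    (R := fun n p q => q.1 - p.1 ∈ FD n (j + 1 + 1 + 1) ∧ q.2 - p.2 ∈ FC n (j + 1 + 1))
    (a := 0) (by simp [hFC0, hFD0]) (by
      rintro n ⟨Y, B⟩ ⟨hxY, haB⟩
      have hcycle : dD (j + 1) (x - dD (j + 1 + 1) Y - f (j + 1 + 1) B) =
          f (j + 1) (a - dC (j + 1) B) := by
        simp only [map_sub, hddD, hxa, hf]
        abel
      have hcycle' : dC j (a - dC (j + 1) B) = 0 := by
        simp only [map_sub, hddC, hca, sub_zero]
      obtain ⟨y, hy, b, hb, hxy, hab⟩ :=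
        exists_cone_boundary_sub_mem_succ hf hfF hgrSurj hgrInj hxY haB hcycle hcycle'
      refine ⟨(Y + y, B + b), ⟨?_, ?_⟩, by simpa using hy, by simpa using hb⟩
      · convert hxy using 1
        simp only [map_add]
        abel
      · convert hab using 1
        simp only [map_add]
        abel)
  exact ⟨fun n => (s n).1, fun n => (s n).2, fun n => (hsucc n).1, fun n => (hsucc n).2,
    fun n => (hs n).1, fun n => (hs n).2⟩

end FilteredComplex

/-- **Lemma (comparison of filtered complexes).**
`K` is a field; `C`, `D` are `ℤ`-indexed chain complexes of `K`-modules with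
differentials `dC i : C (i+1) → C i`, `dD i : D (i+1) → D i`, each equipped
with a decreasing filtration by subcomplexes (`FC 0 = ⊤`, `FD 0 = ⊤`), both
separated and complete.  `f` is a filtration-preserving chain map.  If for
every `n` the induced map of quotient complexes `Fⁿ C / Fⁿ⁺¹ C → Fⁿ D / Fⁿ⁺¹ D`
is a quasi-isomorphism (expressed elementwise: the induced map on homology of
the quotient complexes is surjective and injective in every degree), then `f`
is a quasi-isomorphism (elementwise: `f` induces a surjective and injective
map on homology in every degree). -/
theorem stmt_2
    (K : Type*) [Field K]
    (C : ℤ → Type*) [∀ i, AddCommGroup (C i)] [∀ i, Module K (C i)]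
    (D : ℤ → Type*) [∀ i, AddCommGroup (D i)] [∀ i, Module K (D i)]
    (dC : ∀ i : ℤ, C (i + 1) →ₗ[K] C i)
    (dD : ∀ i : ℤ, D (i + 1) →ₗ[K] D i)
    (hddC : ∀ (i : ℤ) (x : C (i + 1 + 1)), dC i (dC (i + 1) x) = 0)
    (hddD : ∀ (i : ℤ) (x : D (i + 1 + 1)), dD i (dD (i + 1) x) = 0)
    (f : ∀ i : ℤ, C i →ₗ[K] D i)
    (hf : ∀ (i : ℤ) (x : C (i + 1)), f i (dC i x) = dD i (f (i + 1) x))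
    (FC : ℕ → ∀ i : ℤ, Submodule K (C i))
    (FD : ℕ → ∀ i : ℤ, Submodule K (D i))
    (hFC0 : ∀ i : ℤ, FC 0 i = ⊤)
    (hFD0 : ∀ i : ℤ, FD 0 i = ⊤)
    (hFCmono : ∀ (n : ℕ) (i : ℤ), FC (n + 1) i ≤ FC n i)
    (hFDmono : ∀ (n : ℕ) (i : ℤ), FD (n + 1) i ≤ FD n i)
    (hFCd : ∀ (n : ℕ) (i : ℤ) (x : C (i + 1)), x ∈ FC n (i + 1) → dC i x ∈ FC n i)
    (hFDd : ∀ (n : ℕ) (i : ℤ) (x : D (i + 1)), x ∈ FD n (i + 1) → dD i x ∈ FD n i)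
    (hsepC : ∀ (i : ℤ) (x : C i), (∀ n : ℕ, x ∈ FC n i) → x = 0)
    (hsepD : ∀ (i : ℤ) (x : D i), (∀ n : ℕ, x ∈ FD n i) → x = 0)
    (hcomplC : ∀ (i : ℤ) (xs : ℕ → C i),
      (∀ n : ℕ, 1 ≤ n → xs n - xs (n - 1) ∈ FC n i) →
      ∃ x : C i, ∀ m : ℕ, ∃ N : ℕ, ∀ n : ℕ, N ≤ n → xs n - x ∈ FC m i)
    (hcomplD : ∀ (i : ℤ) (xs : ℕ → D i),
      (∀ n : ℕ, 1 ≤ n → xs n - xs (n - 1) ∈ FD n i) →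
      ∃ x : D i, ∀ m : ℕ, ∃ N : ℕ, ∀ n : ℕ, N ≤ n → xs n - x ∈ FD m i)
    (hfF : ∀ (n : ℕ) (i : ℤ) (x : C i), x ∈ FC n i → f i x ∈ FD n i)
    -- surjectivity on homology of the quotient complexes `Fⁿ/Fⁿ⁺¹` in every degree:
    (hgrSurj : ∀ (n : ℕ) (i : ℤ) (x : D (i + 1)),
      x ∈ FD n (i + 1) → dD i x ∈ FD (n + 1) i →
      ∃ a ∈ FC n (i + 1), dC i a ∈ FC (n + 1) i ∧
        ∃ y ∈ FD n (i + 1 + 1), ∃ z ∈ FD (n + 1) (i + 1),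
          x - f (i + 1) a = dD (i + 1) y + z)
    -- injectivity on homology of the quotient complexes `Fⁿ/Fⁿ⁺¹` in every degree:
    (hgrInj : ∀ (n : ℕ) (i : ℤ) (a : C (i + 1)),
      a ∈ FC n (i + 1) → dC i a ∈ FC (n + 1) i →
      (∃ y ∈ FD n (i + 1 + 1), ∃ z ∈ FD (n + 1) (i + 1),
        f (i + 1) a = dD (i + 1) y + z) →
      ∃ b ∈ FC n (i + 1 + 1), ∃ c ∈ FC (n + 1) (i + 1), a = dC (i + 1) b + c) :
    -- `f` induces an isomorphism on homology in every degree: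
    (∀ (i : ℤ) (x : D (i + 1)), dD i x = 0 →
      ∃ a : C (i + 1), dC i a = 0 ∧ ∃ y : D (i + 1 + 1),
        x - f (i + 1) a = dD (i + 1) y) ∧
    (∀ (i : ℤ) (a : C (i + 1)), dC i a = 0 →
      (∃ y : D (i + 1 + 1), f (i + 1) a = dD (i + 1) y) →
      ∃ b : C (i + 1 + 1), a = dC (i + 1) b) := by
  have key : ∀ (j : ℤ) (x : D (j + 1 + 1)) (a : C (j + 1)),
      dD (j + 1) x = f (j + 1) a → dC j a = 0 →
      ∃ b, a = dC (j + 1) b ∧ ∃ y, x - f (j + 1 + 1) b = dD (j + 1 + 1) y := by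
    intro j x a hxa hca
    obtain ⟨y, b, hy, hb, hxr, har⟩ := exists_seq_cone_boundary_sub_mem
      hddC hddD hf hFC0 hFD0 hfF hgrSurj hgrInj hxa hca
    obtain ⟨y', hy'⟩ := exists_limit_of_succ_sub_mem (hcomplD _) hy
    obtain ⟨b', hb'⟩ := exists_limit_of_succ_sub_mem (hcomplC _) hb
    refine ⟨b', sub_eq_zero.mp <| eq_zero_of_eventually_sub_mem (hsepC _)
      (antitone_nat_of_succ_le fun n => hFCmono n _) har fun m => ?_,
      y', sub_eq_zero.mp <| eq_zero_of_eventually_sub_mem (hsepD _)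
      (antitone_nat_of_succ_le fun n => hFDmono n _) hxr fun m => ?_⟩
    · obtain ⟨N, hN⟩ := hb' m
      refine ⟨N, fun n hn => ?_⟩
      convert hFCd m _ _ (hN n hn) using 1
      rw [map_sub]
      abel
    · obtain ⟨N₁, hN₁⟩ := hb' m
      obtain ⟨N₂, hN₂⟩ := hy' m
      refine ⟨max N₁ N₂, fun n hn => ?_⟩
      convert add_mem (hFDd m _ _ (hN₂ n (le_of_max_le_right hn)))
        (hfF m _ _ (hN₁ n (le_of_max_le_left hn))) using 1
      simp only [map_sub]
      abel
  refine ⟨fun i x hx => ?_, fun i a ha ⟨y, hy⟩ => ?_⟩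
  · obtain ⟨j, rfl⟩ : ∃ j : ℤ, i = j + 1 := ⟨i - 1, by omega⟩
    obtain ⟨b, hb, y, hy⟩ := key j x 0 (by simp [hx]) (map_zero _)
    exact ⟨b, hb.symm, y, hy⟩
  · obtain ⟨b, hb, -⟩ := key i y a hy.symm ha
    exact ⟨b, hb⟩
end
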